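/- arXiv:1811.04625 — 6 statements merged into one kernel-verified Lean document; each statement's English description precedes it below -/
import Mathlib

section
/- Let n, t ≥ 1, let F₁, …, F_t be t mutually orthogonal Latin squares of order n indexed by [n] = {0, 1, …, n−1}, and let L be a Latin square of order n indexed by [n]. Define, on the index set [n] × [n], the arrays 𝒳_k((p,r),(q,c)) = (F_k(F₁(p,r), q), F_k(F₁(p,q), c)) for 1 ≤ k ≤ t, and ℬ((p,r),(q,c)) = (F₁(p,q), L(F₁(p,r), c)). Then ℬ together with 𝒳₁, …, 𝒳_t form a set of t+1 mutually orthogonal Latin squares of order n². -/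
/-!
Every coordinate of `𝒳_k` and `ℬ` is obtained by reading one square along a row or a column
that is selected by another square, so each Latin or orthogonality property reduces to peeling off
the coordinates one at a time, using that rows and columns of a Latin square are injective and
that two orthogonal squares jointly determine their cell. Since the squares are finite,
injectivity suffices.
-/

/-- A Latin square on an index/symbol set `α`: every row and every column is a bijection. -/
def IsLatinSquare {α : Type*} (L : α → α → α) : Prop :=
  (∀ r, Function.Bijective (fun c => L r c)) ∧
  (∀ c, Function.Bijective (fun r => L r c))

/-- Two Latin squares (as arrays) are orthogonal if superimposing them gives a bijection. -/
def IsOrthogonal {α : Type*} (L₁ L₂ : α → α → α) : Prop :=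
  Function.Bijective (fun rc : α × α => (L₁ rc.1 rc.2, L₂ rc.1 rc.2))

variable {α : Type*}

namespace IsLatinSquare

variable {L : α → α → α}

theorem row_injective (hL : IsLatinSquare L) (r : α) : Function.Injective (L r) :=
  (hL.1 r).injective

theorem col_injective (hL : IsLatinSquare L) (c : α) : Function.Injective (fun r => L r c) :=
  (hL.2 c).injective

theorem of_injective [Finite α] (hrow : ∀ r, Function.Injective (L r))
    (hcol : ∀ c, Function.Injective (fun r => L r c)) : IsLatinSquare L :=
  ⟨fun r => Finite.injective_iff_bijective.mp (hrow r),
    fun c => Finite.injective_iff_bijective.mp (hcol c)⟩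

end IsLatinSquare

namespace IsOrthogonal

variable {L₁ L₂ : α → α → α}

theorem of_injective [Finite α]
    (h : Function.Injective (fun rc : α × α => (L₁ rc.1 rc.2, L₂ rc.1 rc.2))) :
    IsOrthogonal L₁ L₂ :=
  Finite.injective_iff_bijective.mp h

theorem eq_of_eq (h : IsOrthogonal L₁ L₂) {r c r' c' : α}
    (h₁ : L₁ r c = L₁ r' c') (h₂ : L₂ r c = L₂ r' c') : r = r' ∧ c = c' :=
  Prod.ext_iff.mp (h.injective (a₁ := (r, c)) (a₂ := (r', c')) (Prod.ext h₁ h₂))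

end IsOrthogonal

/-- The paper's array `𝒳_k` is `xSquare F₁ F_k`. -/
def xSquare (A K : α → α → α) (pr qc : α × α) : α × α :=
  (K (A pr.1 pr.2) qc.1, K (A pr.1 qc.1) qc.2)

/-- The paper's array `ℬ` is `bSquare F₁ L`. -/
def bSquare (A L : α → α → α) (pr qc : α × α) : α × α :=
  (A pr.1 qc.1, L (A pr.1 pr.2) qc.2)

variable [Finite α] {A K M L : α → α → α}

theorem isLatinSquare_bSquare (hA : IsLatinSquare A) (hL : IsLatinSquare L) :
    IsLatinSquare (bSquare A L) := by
  refine .of_injective (fun ⟨p, r⟩ ⟨q, c⟩ ⟨q', c'⟩ h => ?_) (fun ⟨q, c⟩ ⟨p, r⟩ ⟨p', r'⟩ h => ?_)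
  · simp only [bSquare, Prod.mk.injEq] at h ⊢
    exact ⟨hA.row_injective p h.1, hL.row_injective _ h.2⟩
  · simp only [bSquare, Prod.mk.injEq] at h ⊢
    obtain rfl := hA.col_injective q h.1
    exact ⟨rfl, hA.row_injective p (hL.col_injective c h.2)⟩

theorem isLatinSquare_xSquare (hA : IsLatinSquare A) (hK : IsLatinSquare K) :
    IsLatinSquare (xSquare A K) := by
  refine .of_injective (fun ⟨p, r⟩ ⟨q, c⟩ ⟨q', c'⟩ h => ?_) (fun ⟨q, c⟩ ⟨p, r⟩ ⟨p', r'⟩ h => ?_)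
  · simp only [xSquare, Prod.mk.injEq] at h ⊢
    obtain rfl := hK.row_injective _ h.1
    exact ⟨rfl, hK.row_injective _ h.2⟩
  · simp only [xSquare, Prod.mk.injEq] at h ⊢
    obtain rfl := hA.col_injective q (hK.col_injective c h.2)
    exact ⟨rfl, hA.row_injective p (hK.col_injective q h.1)⟩

theorem isOrthogonal_xSquare (hA : IsLatinSquare A) (hKM : IsOrthogonal K M) :
    IsOrthogonal (xSquare A K) (xSquare A M) := by
  refine .of_injective fun ⟨⟨p, r⟩, ⟨q, c⟩⟩ ⟨⟨p', r'⟩, ⟨q', c'⟩⟩ h => ?_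
  simp only [xSquare, Prod.mk.injEq] at h
  obtain ⟨⟨hKr, hKc⟩, hMr, hMc⟩ := h
  obtain ⟨hr, rfl⟩ := hKM.eq_of_eq hKr hMr
  obtain ⟨hp, rfl⟩ := hKM.eq_of_eq hKc hMc
  obtain rfl := hA.col_injective q hp
  rw [hA.row_injective p hr]

theorem isOrthogonal_xSquare_bSquare (hA : IsLatinSquare A) (hK : IsLatinSquare K)
    (hL : IsLatinSquare L) : IsOrthogonal (xSquare A K) (bSquare A L) := by
  refine .of_injective fun ⟨⟨p, r⟩, ⟨q, c⟩⟩ ⟨⟨p', r'⟩, ⟨q', c'⟩⟩ h => ?_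
  simp only [xSquare, bSquare, Prod.mk.injEq] at h
  obtain ⟨⟨hKr, hKc⟩, hAq, hLc⟩ := h
  obtain rfl : c = c' := hK.row_injective _ (hAq ▸ hKc)
  have hr : A p r = A p' r' := hL.col_injective c hLc
  obtain rfl : q = q' := hK.row_injective _ (hr ▸ hKr)
  obtain rfl := hA.col_injective q hAq
  rw [hA.row_injective p hr]

theorem stmt_0_general (n t : ℕ) (ht : 1 ≤ t)
    (F : Fin t → Fin n → Fin n → Fin n)
    (hF : ∀ k, IsLatinSquare (F k))
    (hForth : ∀ k l, k ≠ l → IsOrthogonal (F k) (F l))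
    (L : Fin n → Fin n → Fin n) (hL : IsLatinSquare L)
    (X : Fin t → (Fin n × Fin n) → (Fin n × Fin n) → (Fin n × Fin n))
    (hX : ∀ k pr qc, X k pr qc =
      (F k (F ⟨0, ht⟩ pr.1 pr.2) qc.1, F k (F ⟨0, ht⟩ pr.1 qc.1) qc.2))
    (B : (Fin n × Fin n) → (Fin n × Fin n) → (Fin n × Fin n))
    (hB : ∀ pr qc, B pr qc = (F ⟨0, ht⟩ pr.1 qc.1, L (F ⟨0, ht⟩ pr.1 pr.2) qc.2)) :
    IsLatinSquare B ∧ (∀ k, IsLatinSquare (X k)) ∧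
    (∀ k l, k ≠ l → IsOrthogonal (X k) (X l)) ∧
    (∀ k, IsOrthogonal (X k) B) := by
  obtain rfl : B = bSquare (F ⟨0, ht⟩) L := funext₂ hB
  obtain rfl : X = fun k => xSquare (F ⟨0, ht⟩) (F k) := funext fun k => funext₂ (hX k)
  exact ⟨isLatinSquare_bSquare (hF _) hL, fun k => isLatinSquare_xSquare (hF _) (hF k),
    fun k l hkl => isOrthogonal_xSquare (hF _) (hForth k l hkl),
    fun k => isOrthogonal_xSquare_bSquare (hF _) (hF k) hL⟩

/-- Theorem 4 of the paper: `ℬ` together with `𝒳₁, …, 𝒳_t` form `t+1` MOLS of order `n²`. -/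
theorem stmt_0 (n t : ℕ) (hn : 1 ≤ n) (ht : 1 ≤ t)
    (F : Fin t → Fin n → Fin n → Fin n)
    (hF : ∀ k, IsLatinSquare (F k))
    (hForth : ∀ k l, k ≠ l → IsOrthogonal (F k) (F l))
    (L : Fin n → Fin n → Fin n) (hL : IsLatinSquare L)
    (X : Fin t → (Fin n × Fin n) → (Fin n × Fin n) → (Fin n × Fin n))
    (hX : ∀ k pr qc, X k pr qc =
      (F k (F ⟨0, ht⟩ pr.1 pr.2) qc.1, F k (F ⟨0, ht⟩ pr.1 qc.1) qc.2))
    (B : (Fin n × Fin n) → (Fin n × Fin n) → (Fin n × Fin n))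
    (hB : ∀ pr qc, B pr qc = (F ⟨0, ht⟩ pr.1 qc.1, L (F ⟨0, ht⟩ pr.1 pr.2) qc.2)) :
    IsLatinSquare B ∧ (∀ k, IsLatinSquare (X k)) ∧
    (∀ k l, k ≠ l → IsOrthogonal (X k) (X l)) ∧
    (∀ k, IsOrthogonal (X k) B) :=
  stmt_0_general n t ht F hF hForth L hL X hX B hB
end

section
/- Let n, t ≥ 1, let F₁, …, F_t be t mutually orthogonal Latin squares of order n indexed by [n] = {0, 1, …, n−1}, and let L be a Latin square of order n indexed by [n]. Then the array ℬ defined on the index set [n] × [n] by ℬ((p,r),(q,c)) = (F₁(p,q), L(F₁(p,r), c)) is a Latin square of order n². -/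
/- A row of `ℬ` is the product of a row of `F` and a row of `L`. A column `(q, c)` of `ℬ` is the
shear map `(p, r) ↦ (F p q, L (F p r) c)`: its first coordinate is a column of `F`, and for each
fixed `p` its second coordinate is a row of `F` followed by a column of `L`. -/

theorem Function.Bijective.prodShear {α β γ δ : Type*} {f : α → γ} {g : α → β → δ}
    (hf : Function.Bijective f) (hg : ∀ a, Function.Bijective (g a)) :
    Function.Bijective (fun x : α × β => (f x.1, g x.1 x.2)) :=
  (Equiv.prodShear (Equiv.ofBijective f hf) fun a => Equiv.ofBijective (g a) (hg a)).bijective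

theorem IsLatinSquare.shear {α : Type*} {F L : α → α → α}
    (hF : IsLatinSquare F) (hL : IsLatinSquare L) :
    IsLatinSquare fun pr qc : α × α => (F pr.1 qc.1, L (F pr.1 pr.2) qc.2) :=
  ⟨fun pr => (hF.1 pr.1).prodMap (hL.1 _),
    fun qc => (hF.2 qc.1).prodShear fun p => (hL.2 qc.2).comp (hF.1 p)⟩

theorem stmt_1_general (n t : ℕ) (ht : 1 ≤ t)
    (F : Fin t → Fin n → Fin n → Fin n)
    (hF : ∀ k, IsLatinSquare (F k))
    (L : Fin n → Fin n → Fin n) (hL : IsLatinSquare L)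
    (B : (Fin n × Fin n) → (Fin n × Fin n) → (Fin n × Fin n))
    (hB : ∀ pr qc, B pr qc = (F ⟨0, ht⟩ pr.1 qc.1, L (F ⟨0, ht⟩ pr.1 pr.2) qc.2)) :
    IsLatinSquare B := by
  obtain rfl : B = _ := funext₂ hB
  exact (hF ⟨0, ht⟩).shear hL

/-- The array `ℬ((p,r),(q,c)) = (F₁(p,q), L(F₁(p,r),c))` is a Latin square of order `n²`. -/
theorem stmt_1 (n t : ℕ) (hn : 1 ≤ n) (ht : 1 ≤ t)
    (F : Fin t → Fin n → Fin n → Fin n)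
    (hF : ∀ k, IsLatinSquare (F k))
    (hForth : ∀ k l, k ≠ l → IsOrthogonal (F k) (F l))
    (L : Fin n → Fin n → Fin n) (hL : IsLatinSquare L)
    (B : (Fin n × Fin n) → (Fin n × Fin n) → (Fin n × Fin n))
    (hB : ∀ pr qc, B pr qc = (F ⟨0, ht⟩ pr.1 qc.1, L (F ⟨0, ht⟩ pr.1 pr.2) qc.2)) :
    IsLatinSquare B :=
  stmt_1_general n t ht F hF L hL B hB
end

section
/- Let n, t ≥ 1 and let F₁, …, F_t be t mutually orthogonal Latin squares of order n indexed by [n] = {0, 1, …, n−1}. For 1 ≤ k ≤ t define the array 𝒳_k on the index set [n] × [n] by 𝒳_k((p,r),(q,c)) = (F_k(F₁(p,r), q), F_k(F₁(p,q), c)). Then for all k ≠ ℓ with 1 ≤ k, ℓ ≤ t, the Latin squares 𝒳_k and 𝒳_ℓ of order n² are orthogonal. -/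
/-!
Superimposing `𝒳_k` and `𝒳_ℓ` at `((p, r), (q, c))`, the first coordinates give the pair
`(F_k (a, q), F_ℓ (a, q))` with `a = F₁ (p, r)`, and the second ones the pair `(F_k (b, c), F_ℓ (b, c))`
with `b = F₁ (p, q)`. Orthogonality of `F_k` and `F_ℓ` recovers `a, q, b, c`; from `q` and `b` the
column of `F₁` through `q` recovers `p`, and then the row of `F₁` through `p` recovers `r` from `a`.
So the superposition is injective, hence bijective on the finite set `[n]² × [n]²`.
-/

/-- The paper's `𝒳_k` is `productArray F₁ F_k`. -/
def productArray {α : Type*} (L A : α → α → α) : α × α → α × α → α × α :=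
  fun pr qc => (A (L pr.1 pr.2) qc.1, A (L pr.1 qc.1) qc.2)

section

variable {α : Type*} {L A B : α → α → α}

theorem productArray_superpose_injective (hL : IsLatinSquare L)
    (hAB : Function.Injective fun rc : α × α => (A rc.1 rc.2, B rc.1 rc.2)) :
    Function.Injective fun x : (α × α) × (α × α) =>
      (productArray L A x.1 x.2, productArray L B x.1 x.2) := by
  rintro ⟨⟨p, r⟩, ⟨q, c⟩⟩ ⟨⟨p', r'⟩, ⟨q', c'⟩⟩ h
  simp only [productArray, Prod.mk.injEq] at h
  obtain ⟨⟨hA₁, hA₂⟩, hB₁, hB₂⟩ := h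
  obtain ⟨hrow, rfl⟩ := Prod.mk.inj (hAB (Prod.ext hA₁ hB₁ : (_, _) = (_, _)))
  obtain ⟨hcol, rfl⟩ := Prod.mk.inj (hAB (Prod.ext hA₂ hB₂ : (_, _) = (_, _)))
  obtain rfl : p = p' := (hL.2 q).injective hcol
  obtain rfl : r = r' := (hL.1 p).injective hrow
  rfl

theorem IsOrthogonal.productArray [Finite α] (hL : IsLatinSquare L) (hAB : IsOrthogonal A B) :
    IsOrthogonal (productArray L A) (productArray L B) :=
  Finite.injective_iff_bijective.mp (productArray_superpose_injective hL hAB.injective)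

end

theorem stmt_3_general (n t : ℕ) (ht : 1 ≤ t)
    (F : Fin t → Fin n → Fin n → Fin n)
    (hF : ∀ k, IsLatinSquare (F k))
    (hForth : ∀ k l, k ≠ l → IsOrthogonal (F k) (F l))
    (X : Fin t → (Fin n × Fin n) → (Fin n × Fin n) → (Fin n × Fin n))
    (hX : ∀ k pr qc, X k pr qc =
      (F k (F ⟨0, ht⟩ pr.1 pr.2) qc.1, F k (F ⟨0, ht⟩ pr.1 qc.1) qc.2)) :
    ∀ k l, k ≠ l → IsOrthogonal (X k) (X l) := by
  have hX_eq : ∀ k, X k = productArray (F ⟨0, ht⟩) (F k) := fun k => by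
    funext pr qc
    exact hX k pr qc
  intro k l hkl
  rw [hX_eq k, hX_eq l]
  exact (hForth k l hkl).productArray (hF ⟨0, ht⟩)

/-- For `k ≠ ℓ`, the Latin squares `𝒳_k` and `𝒳_ℓ` of order `n²` are orthogonal. -/
theorem stmt_3 (n t : ℕ) (hn : 1 ≤ n) (ht : 1 ≤ t)
    (F : Fin t → Fin n → Fin n → Fin n)
    (hF : ∀ k, IsLatinSquare (F k))
    (hForth : ∀ k l, k ≠ l → IsOrthogonal (F k) (F l))
    (X : Fin t → (Fin n × Fin n) → (Fin n × Fin n) → (Fin n × Fin n))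
    (hX : ∀ k pr qc, X k pr qc =
      (F k (F ⟨0, ht⟩ pr.1 pr.2) qc.1, F k (F ⟨0, ht⟩ pr.1 qc.1) qc.2)) :
    ∀ k l, k ≠ l → IsOrthogonal (X k) (X l) :=
  stmt_3_general n t ht F hF hForth X hX
end

section
/- Let n, t ≥ 1, let F₁, …, F_t be t mutually orthogonal Latin squares of order n indexed by [n] = {0, 1, …, n−1}, and let L be a Latin square of order n indexed by [n]. Define on the index set [n] × [n] the arrays 𝒳_k((p,r),(q,c)) = (F_k(F₁(p,r), q), F_k(F₁(p,q), c)) for 1 ≤ k ≤ t and ℬ((p,r),(q,c)) = (F₁(p,q), L(F₁(p,r), c)). Then for each k with 1 ≤ k ≤ t, the Latin squares 𝒳_k and ℬ of order n² are orthogonal. -/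
open Function

/-- The cell `((p, r), (q, c))` is recovered from its two symbols in the order
`c`, `G p r`, `q`, `p`, `r`; injectivity suffices as `α` is finite. -/
theorem isOrthogonal_product_squares {α : Type*} [Finite α] {G H L : α → α → α}
    (hG_row : ∀ p, Injective (G p)) (hG_col : ∀ q, Injective (G · q))
    (hH_row : ∀ a, Injective (H a)) (hL_col : ∀ c, Injective (L · c)) :
    IsOrthogonal (fun pr qc : α × α => (H (G pr.1 pr.2) qc.1, H (G pr.1 qc.1) qc.2))
      (fun pr qc => (G pr.1 qc.1, L (G pr.1 pr.2) qc.2)) := by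
  refine Finite.injective_iff_bijective.mp ?_
  rintro ⟨⟨p, r⟩, q, c⟩ ⟨⟨p', r'⟩, q', c'⟩ h
  simp only [Prod.mk.injEq] at h
  obtain ⟨⟨hHq, hHc⟩, hGq, hLc⟩ := h
  obtain rfl : c = c' := hH_row _ (hGq ▸ hHc)
  have hGr : G p r = G p' r' := hL_col c hLc
  obtain rfl : q = q' := hH_row _ (hGr ▸ hHq)
  obtain rfl : p = p' := hG_col q hGq
  obtain rfl : r = r' := hG_row p hGr
  rfl

theorem stmt_4_general (n t : ℕ) (ht : 1 ≤ t)
    (F : Fin t → Fin n → Fin n → Fin n)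
    (hF : ∀ k, IsLatinSquare (F k))
    (L : Fin n → Fin n → Fin n) (hL : IsLatinSquare L)
    (X : Fin t → (Fin n × Fin n) → (Fin n × Fin n) → (Fin n × Fin n))
    (hX : ∀ k pr qc, X k pr qc =
      (F k (F ⟨0, ht⟩ pr.1 pr.2) qc.1, F k (F ⟨0, ht⟩ pr.1 qc.1) qc.2))
    (B : (Fin n × Fin n) → (Fin n × Fin n) → (Fin n × Fin n))
    (hB : ∀ pr qc, B pr qc = (F ⟨0, ht⟩ pr.1 qc.1, L (F ⟨0, ht⟩ pr.1 pr.2) qc.2)) :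
    ∀ k, IsOrthogonal (X k) B := by
  intro k
  have hX_eq : X k = _ := funext fun pr => funext (hX k pr)
  have hB_eq : B = _ := funext fun pr => funext (hB pr)
  rw [hX_eq, hB_eq]
  exact isOrthogonal_product_squares (fun p => ((hF _).1 p).injective)
    (fun q => ((hF _).2 q).injective) (fun a => ((hF k).1 a).injective)
    (fun c => (hL.2 c).injective)

/-- For each `k`, the Latin squares `𝒳_k` and `ℬ` of order `n²` are orthogonal. -/
theorem stmt_4 (n t : ℕ) (hn : 1 ≤ n) (ht : 1 ≤ t)
    (F : Fin t → Fin n → Fin n → Fin n)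
    (hF : ∀ k, IsLatinSquare (F k))
    (hForth : ∀ k l, k ≠ l → IsOrthogonal (F k) (F l))
    (L : Fin n → Fin n → Fin n) (hL : IsLatinSquare L)
    (X : Fin t → (Fin n × Fin n) → (Fin n × Fin n) → (Fin n × Fin n))
    (hX : ∀ k pr qc, X k pr qc =
      (F k (F ⟨0, ht⟩ pr.1 pr.2) qc.1, F k (F ⟨0, ht⟩ pr.1 qc.1) qc.2))
    (B : (Fin n × Fin n) → (Fin n × Fin n) → (Fin n × Fin n))
    (hB : ∀ pr qc, B pr qc = (F ⟨0, ht⟩ pr.1 qc.1, L (F ⟨0, ht⟩ pr.1 pr.2) qc.2)) :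
    ∀ k, IsOrthogonal (X k) B :=
  stmt_4_general n t ht F hF L hL X hX B hB
end

section
/- Let n ≥ 1, let B₁, B₂ be a pair of orthogonal Latin squares of order n indexed by [n] = {0, 1, …, n−1}, and let C_α, C_β be Latin squares of order n indexed by [n]. Then the array 𝒳_{α,β} defined on the index set [n] × [n] by 𝒳_{α,β}((p,r),(q,c)) = (C_α(p, B₁(r,c)), C_β(q, B₂(r,c))) is a Latin square of order n². -/
/-!
Fix a row `(p, r)`. The first symbol coordinate `Cα p (B₁ r c)` is a bijective function of the
column coordinate `c` alone, and once `c` is fixed the second coordinate `Cβ q (B₂ r c)` is a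
bijective function of `q`. A map of this triangular (shear) shape is a bijection of `α × α`;
columns are handled symmetrically, with the roles of the two symbol coordinates exchanged.
-/

open Function

section Shear

variable {α β γ δ : Type*} {f : β → γ} {g : β → α → δ}

theorem Function.Bijective.prodShear_snd (hf : Bijective f) (hg : ∀ b, Bijective (g b)) :
    Bijective fun x : α × β => (f x.2, g x.2 x.1) :=
  (Equiv.prodShear (Equiv.ofBijective f hf) fun b => Equiv.ofBijective (g b) (hg b)).bijective.comp
    Prod.swap_bijective

theorem Function.Bijective.prodShear_snd_swap (hf : Bijective f) (hg : ∀ b, Bijective (g b)) :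
    Bijective fun x : α × β => (g x.2 x.1, f x.2) :=
  Prod.swap_bijective.comp (hf.prodShear_snd hg)

end Shear

theorem IsLatinSquare.prod_compose {α : Type*} {B₁ B₂ Cα Cβ : α → α → α}
    (hB₁ : ∀ r, Bijective (B₁ r)) (hB₂ : ∀ c, Bijective fun r => B₂ r c)
    (hCα : IsLatinSquare Cα) (hCβ : IsLatinSquare Cβ) :
    IsLatinSquare fun (pr qc : α × α) => (Cα pr.1 (B₁ pr.2 qc.2), Cβ qc.1 (B₂ pr.2 qc.2)) :=
  ⟨fun pr => ((hCα.1 pr.1).comp (hB₁ pr.2)).prodShear_snd fun c => hCβ.2 (B₂ pr.2 c),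
    fun qc => ((hCβ.1 qc.1).comp (hB₂ qc.2)).prodShear_snd_swap fun r => hCα.2 (B₁ r qc.2)⟩

theorem stmt_9_general (n : ℕ)
    (B₁ B₂ : Fin n → Fin n → Fin n)
    (hB₁ : IsLatinSquare B₁) (hB₂ : IsLatinSquare B₂)
    (Cα Cβ : Fin n → Fin n → Fin n)
    (hCα : IsLatinSquare Cα) (hCβ : IsLatinSquare Cβ)
    (X : (Fin n × Fin n) → (Fin n × Fin n) → (Fin n × Fin n))
    (hX : ∀ pr qc, X pr qc =
      (Cα pr.1 (B₁ pr.2 qc.2), Cβ qc.1 (B₂ pr.2 qc.2))) :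
    IsLatinSquare X := by
  obtain rfl : X = fun pr qc => (Cα pr.1 (B₁ pr.2 qc.2), Cβ qc.1 (B₂ pr.2 qc.2)) := funext₂ hX
  exact IsLatinSquare.prod_compose hB₁.1 hB₂.2 hCα hCβ

/-- The array `𝒳_{α,β}((p,r),(q,c)) = (C_α(p,B₁(r,c)), C_β(q,B₂(r,c)))` is a Latin square
of order `n²`. -/
theorem stmt_9 (n : ℕ) (hn : 1 ≤ n)
    (B₁ B₂ : Fin n → Fin n → Fin n)
    (hB₁ : IsLatinSquare B₁) (hB₂ : IsLatinSquare B₂) (hB : IsOrthogonal B₁ B₂)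
    (Cα Cβ : Fin n → Fin n → Fin n)
    (hCα : IsLatinSquare Cα) (hCβ : IsLatinSquare Cβ)
    (X : (Fin n × Fin n) → (Fin n × Fin n) → (Fin n × Fin n))
    (hX : ∀ pr qc, X pr qc =
      (Cα pr.1 (B₁ pr.2 qc.2), Cβ qc.1 (B₂ pr.2 qc.2))) :
    IsLatinSquare X :=
  stmt_9_general n B₁ B₂ hB₁ hB₂ Cα Cβ hCα hCβ X hX
end

section
/- Let n ≥ 1, let B₁, B₂ be a pair of orthogonal Latin squares of order n indexed by [n] = {0, 1, …, n−1}, and let C_α, C_β, C_γ, C_δ be Latin squares of order n indexed by [n] such that C_α is orthogonal to C_γ and C_β is orthogonal to C_δ. Define the arrays 𝒳_{α,β}((p,r),(q,c)) = (C_α(p, B₁(r,c)), C_β(q, B₂(r,c))) and 𝒳_{γ,δ}((p,r),(q,c)) = (C_γ(p, B₁(r,c)), C_δ(q, B₂(r,c))) on the index set [n] × [n]. Then the Latin squares 𝒳_{α,β} and 𝒳_{γ,δ} of order n² are orthogonal. -/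
/-- The array `𝒳` built from the base pair `B₁, B₂` and the squares `C, D`. -/
def compoundSquare {α : Type*} (B₁ B₂ C D : α → α → α) (pr qc : α × α) : α × α :=
  (C pr.1 (B₁ pr.2 qc.2), D qc.1 (B₂ pr.2 qc.2))

/- Superimposing the two compound squares factors as
`((p,r),(q,c)) ↦ ((p,q),(r,c)) ↦ ((p,q),(s,t)) ↦ ((p,s),(q,t)) ↦ ((a,a'),(b,b')) ↦ ((a,b),(a',b'))`,
where the second step superimposes `B₁, B₂` and the fourth superimposes `C₁, C₂` and `D₁, D₂`. -/
theorem IsOrthogonal.compoundSquare {α : Type*} {B₁ B₂ C₁ C₂ D₁ D₂ : α → α → α}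
    (hB : IsOrthogonal B₁ B₂) (hC : IsOrthogonal C₁ C₂) (hD : IsOrthogonal D₁ D₂) :
    IsOrthogonal (compoundSquare B₁ B₂ C₁ D₁) (compoundSquare B₁ B₂ C₂ D₂) := by
  have shuffle := (Equiv.prodProdProdComm α α α α).bijective
  exact shuffle.comp <| (hC.prodMap hD).comp <| shuffle.comp <|
    (Function.bijective_id.prodMap hB).comp shuffle

theorem stmt_10_general (n : ℕ)
    (B₁ B₂ : Fin n → Fin n → Fin n)
    (hB : IsOrthogonal B₁ B₂)
    (Cα Cβ Cγ Cδ : Fin n → Fin n → Fin n)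
    (hαγ : IsOrthogonal Cα Cγ) (hβδ : IsOrthogonal Cβ Cδ)
    (Xαβ Xγδ : (Fin n × Fin n) → (Fin n × Fin n) → (Fin n × Fin n))
    (hXαβ : ∀ pr qc, Xαβ pr qc =
      (Cα pr.1 (B₁ pr.2 qc.2), Cβ qc.1 (B₂ pr.2 qc.2)))
    (hXγδ : ∀ pr qc, Xγδ pr qc =
      (Cγ pr.1 (B₁ pr.2 qc.2), Cδ qc.1 (B₂ pr.2 qc.2))) :
    IsOrthogonal Xαβ Xγδ := by
  obtain rfl : Xαβ = compoundSquare B₁ B₂ Cα Cβ := funext₂ hXαβ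
  obtain rfl : Xγδ = compoundSquare B₁ B₂ Cγ Cδ := funext₂ hXγδ
  exact hB.compoundSquare hαγ hβδ

/-- If `C_α ⊥ C_γ` and `C_β ⊥ C_δ`, then the Latin squares `𝒳_{α,β}` and `𝒳_{γ,δ}`
of order `n²` are orthogonal. -/
theorem stmt_10 (n : ℕ) (hn : 1 ≤ n)
    (B₁ B₂ : Fin n → Fin n → Fin n)
    (hB₁ : IsLatinSquare B₁) (hB₂ : IsLatinSquare B₂) (hB : IsOrthogonal B₁ B₂)
    (Cα Cβ Cγ Cδ : Fin n → Fin n → Fin n)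
    (hCα : IsLatinSquare Cα) (hCβ : IsLatinSquare Cβ)
    (hCγ : IsLatinSquare Cγ) (hCδ : IsLatinSquare Cδ)
    (hαγ : IsOrthogonal Cα Cγ) (hβδ : IsOrthogonal Cβ Cδ)
    (Xαβ Xγδ : (Fin n × Fin n) → (Fin n × Fin n) → (Fin n × Fin n))
    (hXαβ : ∀ pr qc, Xαβ pr qc =
      (Cα pr.1 (B₁ pr.2 qc.2), Cβ qc.1 (B₂ pr.2 qc.2)))
    (hXγδ : ∀ pr qc, Xγδ pr qc =
      (Cγ pr.1 (B₁ pr.2 qc.2), Cδ qc.1 (B₂ pr.2 qc.2))) :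
    IsOrthogonal Xαβ Xγδ :=
  stmt_10_general n B₁ B₂ hB Cα Cβ Cγ Cδ hαγ hβδ Xαβ Xγδ hXαβ hXγδ
end
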